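/- arXiv:2311.14222 — 3 statements merged into one kernel-verified Lean document; each statement's English description precedes it below -/
import Mathlib

section
/- Suppose $0 < c < 1$, $0 < \delta \le q$, $\lambda > 0$, and $q\lambda \le (1-c)\frac{\sqrt{q-c\delta}-\sqrt{c(q-\delta)}}{\sqrt{q-c\delta}+\sqrt{c(q-\delta)}}$ (equivalently $\lambda \le (\sqrt{q-c\delta}-\sqrt{c(q-\delta)})^2/q^2$, so the discriminant $(1+c-q\lambda)^2 - 4c(1-\delta\lambda) \ge 0$). Then the larger real eigenvalue $x_2 = \frac{1+c-q\lambda + \sqrt{(1+c-q\lambda)^2 - 4c(1-\delta\lambda)}}{2}$ satisfies $1 - \frac{\sqrt{q-c\delta}(\sqrt{q-c\delta}+\sqrt{c(q-\delta)})}{1-c}\lambda \le x_2 \le 1 - \frac{q-c\delta}{1-c}\lambda$. -/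
set_option maxHeartbeats 1600000 in
theorem stmt_12 (c δ q lam : ℝ) (hc0 : 0 < c) (hc1 : c < 1)
    (hδ : 0 < δ) (hδq : δ ≤ q) (hlam : 0 < lam)
    (hcut : q * lam ≤ (1 - c) *
      ((Real.sqrt (q - c * δ) - Real.sqrt (c * (q - δ))) /
       (Real.sqrt (q - c * δ) + Real.sqrt (c * (q - δ)))))
    (x2 : ℝ)
    (hx2 : x2 = (1 + c - q * lam +
      Real.sqrt ((1 + c - q * lam) ^ 2 - 4 * c * (1 - δ * lam))) / 2) :
    1 - Real.sqrt (q - c * δ) *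
        (Real.sqrt (q - c * δ) + Real.sqrt (c * (q - δ))) / (1 - c) * lam ≤ x2 ∧
    x2 ≤ 1 - (q - c * δ) / (1 - c) * lam := by
  set a := Real.sqrt (q - c * δ) with ha
  set b := Real.sqrt (c * (q - δ)) with hb
  have hq0 : 0 < q := lt_of_lt_of_le hδ hδq
  have h1c : 0 < 1 - c := by linarith
  have hqcδ : 0 ≤ q - c * δ := by nlinarith
  have hqδ : 0 ≤ c * (q - δ) := by nlinarith
  have ha2 : a ^ 2 = q - c * δ := Real.sq_sqrt hqcδ
  have hb2 : b ^ 2 = c * (q - δ) := Real.sq_sqrt hqδ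
  have ha0 : 0 ≤ a := Real.sqrt_nonneg _
  have hb0 : 0 ≤ b := Real.sqrt_nonneg _
  have hab2 : a ^ 2 - b ^ 2 = q * (1 - c) := by rw [ha2, hb2]; ring
  have hba : b < a := by nlinarith
  have habpos : 0 < a + b := by linarith
  -- from hcut : q^2 * lam ≤ (a-b)^2
  have hcut' : q * lam * (a + b) ≤ (1 - c) * (a - b) := by
    have h := hcut
    rw [mul_div_assoc'] at h
    exact (le_div_iff₀ habpos).mp h
  have hkey : q ^ 2 * lam ≤ (a - b) ^ 2 := by nlinarith [mul_le_mul_of_nonneg_left hcut' hq0.le]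
  have hq2 : q ^ 2 * (1 - c) ^ 2 = (a ^ 2 - b ^ 2) ^ 2 := by rw [hab2]; ring
  have hlab : lam * (a + b) ^ 2 ≤ (1 - c) ^ 2 := by
    have h := mul_le_mul_of_nonneg_left hkey (sq_nonneg (1 - c))
    have hab : 0 < (a - b) ^ 2 := pow_pos (sub_pos.mpr hba) 2
    nlinarith [h]
  set D := (1 + c - q * lam) ^ 2 - 4 * c * (1 - δ * lam) with hDdef
  have hD : D = q ^ 2 * lam ^ 2 - 2 * (a ^ 2 + b ^ 2) * lam + (1 - c) ^ 2 := by
    rw [hDdef, ha2, hb2]; ring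
  have hL0 : 0 ≤ (1 - c) ^ 2 - (a + b) ^ 2 * lam := by nlinarith [hlab]
  have hR0 : 0 ≤ (1 - c) ^ 2 - (a ^ 2 + b ^ 2) * lam := by
    have h1 : 0 ≤ a * b * lam := by positivity
    have h2 : (a ^ 2 + b ^ 2) * lam = lam * (a + b) ^ 2 - 2 * (a * b * lam) := by ring
    linarith [hlab]
  have habl : 0 ≤ a * b * lam := by positivity
  have hDL : ((1 - c) ^ 2 - (a + b) ^ 2 * lam) ^ 2 ≤ D * (1 - c) ^ 2 := by
    rw [hD]
    nlinarith [hq2, mul_nonneg habl hL0]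
  have hDR : D * (1 - c) ^ 2 ≤ ((1 - c) ^ 2 - (a ^ 2 + b ^ 2) * lam) ^ 2 := by
    rw [hD]
    nlinarith [hq2, sq_nonneg (a * b * lam)]
  have hD0 : 0 ≤ D := by nlinarith [hDL, sq_nonneg ((1 - c) ^ 2 - (a + b) ^ 2 * lam), mul_pos h1c h1c]
  set s := Real.sqrt D with hs
  have hs0 : 0 ≤ s := Real.sqrt_nonneg _
  have hsc : Real.sqrt (D * (1 - c) ^ 2) = s * (1 - c) := by
    rw [Real.sqrt_mul hD0, Real.sqrt_sq h1c.le]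
  have hsU : s * (1 - c) ≤ (1 - c) ^ 2 - (a ^ 2 + b ^ 2) * lam := by
    rw [← hsc]
    calc Real.sqrt (D * (1 - c) ^ 2)
        ≤ Real.sqrt (((1 - c) ^ 2 - (a ^ 2 + b ^ 2) * lam) ^ 2) := Real.sqrt_le_sqrt hDR
      _ = (1 - c) ^ 2 - (a ^ 2 + b ^ 2) * lam := Real.sqrt_sq hR0
  have hsL : (1 - c) ^ 2 - (a + b) ^ 2 * lam ≤ s * (1 - c) := by
    rw [← hsc]
    calc (1 - c) ^ 2 - (a + b) ^ 2 * lam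
        = Real.sqrt (((1 - c) ^ 2 - (a + b) ^ 2 * lam) ^ 2) := (Real.sqrt_sq hL0).symm
      _ ≤ Real.sqrt (D * (1 - c) ^ 2) := Real.sqrt_le_sqrt hDL
  have hx2' : x2 = (1 + c - q * lam + s) / 2 := hx2
  constructor
  · rw [hx2', ← sub_nonneg]
    have expand : (1 + c - q * lam + s) / 2 - (1 - a * (a + b) / (1 - c) * lam)
        = (s * (1 - c) - ((1 - c) ^ 2 - (a + b) ^ 2 * lam)
           + ((1 - c) ^ 2 - (a + b) ^ 2 * lam) + (1 + c - q * lam) * (1 - c)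
           - 2 * (1 - c) + 2 * a * (a + b) * lam) / (2 * (1 - c)) := by
      field_simp
      ring
    rw [expand]
    apply div_nonneg _ (by linarith)
    nlinarith [hsL]
  · rw [hx2', ← sub_nonneg]
    have expand : 1 - (q - c * δ) / (1 - c) * lam - (1 + c - q * lam + s) / 2
        = (((1 - c) ^ 2 - (a ^ 2 + b ^ 2) * lam) - s * (1 - c)
           + 2 * (1 - c) - 2 * a ^ 2 * lam - ((1 - c) ^ 2 - (a ^ 2 + b ^ 2) * lam)
           - (1 + c - q * lam) * (1 - c)) / (2 * (1 - c)) := by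
      rw [← ha2]
      field_simp
      ring
    rw [expand]
    apply div_nonneg _ (by linarith)
    nlinarith [hsU]
end

section
/- Suppose $0 < c < 1$, $0 < \delta \le q$, $\lambda > 0$, and $\lambda \ge (\sqrt{q-c\delta}+\sqrt{c(q-\delta)})^2/q^2$ (the large-eigenvalue regime, discriminant $\ge 0$). Then the larger real root $x_2 = \frac{1+c-q\lambda + \sqrt{(1+c-q\lambda)^2 - 4c(1-\delta\lambda)}}{2}$ satisfies $\frac{c\delta - \sqrt{c(q-\delta)(q-c\delta)}}{q} \le x_2 \le \frac{c\delta}{q}$. -/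
set_option maxHeartbeats 1000000 in
theorem stmt_13 (c δ q lam : ℝ) (hc0 : 0 < c) (hc1 : c < 1)
    (hδ : 0 < δ) (hδq : δ ≤ q) (hlam : 0 < lam)
    (hcut : (Real.sqrt (q - c * δ) + Real.sqrt (c * (q - δ))) ^ 2 / q ^ 2 ≤ lam)
    (x2 : ℝ)
    (hx2 : x2 = (1 + c - q * lam +
      Real.sqrt ((1 + c - q * lam) ^ 2 - 4 * c * (1 - δ * lam))) / 2) :
    (c * δ - Real.sqrt (c * (q - δ) * (q - c * δ))) / q ≤ x2 ∧ x2 ≤ c * δ / q := by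
  have hq : 0 < q := lt_of_lt_of_le hδ hδq
  have hqδ : 0 ≤ q - δ := by linarith
  have hqcδ : 0 < q - c * δ := by nlinarith
  set u := Real.sqrt (q - c * δ) with hu
  set v := Real.sqrt (c * (q - δ)) with hv
  have hu0 : 0 ≤ u := Real.sqrt_nonneg _
  have hv0 : 0 ≤ v := Real.sqrt_nonneg _
  have hu2 : u ^ 2 = q - c * δ := Real.sq_sqrt hqcδ.le
  have hv2 : v ^ 2 = c * (q - δ) := Real.sq_sqrt (mul_nonneg hc0.le hqδ)
  have hcut' : (u + v) ^ 2 ≤ lam * q ^ 2 := by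
    rw [div_le_iff₀ (by positivity)] at hcut; linarith
  set D := (1 + c - q * lam) ^ 2 - 4 * c * (1 - δ * lam) with hDdef
  have hD : 0 ≤ D := by
    have h2 : (u - v) ^ 2 ≤ (u + v) ^ 2 := by nlinarith [mul_nonneg hu0 hv0]
    have hprod : 0 ≤ (lam * q ^ 2 - (u + v) ^ 2) * (lam * q ^ 2 - (u - v) ^ 2) :=
      mul_nonneg (by linarith) (by linarith)
    have hid : D * q ^ 2 = (lam * q ^ 2 - (u + v) ^ 2) * (lam * q ^ 2 - (u - v) ^ 2) := by
      have h : (lam * q ^ 2 - (u + v) ^ 2) * (lam * q ^ 2 - (u - v) ^ 2)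
          = (lam * q ^ 2 - u ^ 2 - v ^ 2) ^ 2 - 4 * u ^ 2 * v ^ 2 := by ring
      rw [h, hu2, hv2]; ring
    nlinarith [mul_pos hq hq]
  set s := Real.sqrt D with hsdef
  have hs0 : 0 ≤ s := Real.sqrt_nonneg _
  have hs2 : s ^ 2 = D := Real.sq_sqrt hD
  set S := Real.sqrt (c * (q - δ) * (q - c * δ)) with hSdef
  have hS0 : 0 ≤ S := Real.sqrt_nonneg _
  have hS2 : S ^ 2 = c * (q - δ) * (q - c * δ) :=
    Real.sq_sqrt (mul_nonneg (mul_nonneg hc0.le hqδ) hqcδ.le)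
  have hT : 0 ≤ 2 * c * δ - q * (1 + c - q * lam) := by
    nlinarith [mul_nonneg hu0 hv0]
  have hupper : q * s ≤ 2 * c * δ - q * (1 + c - q * lam) := by
    have h1 : (q * s) ^ 2 ≤ (2 * c * δ - q * (1 + c - q * lam)) ^ 2 := by
      nlinarith [hs2, mul_nonneg (mul_nonneg hc0.le hqδ) hqcδ.le]
    exact (pow_le_pow_iff_left₀ (mul_nonneg hq.le hs0) hT two_ne_zero).1 h1
  constructor
  · rw [hx2, div_le_div_iff₀ hq (by norm_num : (0:ℝ) < 2)]
    have hqs : 0 ≤ q * s := mul_nonneg hq.le hs0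
    have hTid : (2 * c * δ - q * (1 + c - q * lam)) ^ 2 = q ^ 2 * s ^ 2 + 4 * S ^ 2 := by
      rw [hs2, hS2, hDdef]; ring
    have hmul : 0 ≤ 2 * (q * s) * (2 * c * δ - q * (1 + c - q * lam) - q * s) :=
      mul_nonneg (by linarith) (sub_nonneg.2 hupper)
    have hsq : (2 * c * δ - q * (1 + c - q * lam) - q * s) ^ 2 ≤ (2 * S) ^ 2 := by
      linarith [hTid, hmul]
    have hfin : 2 * c * δ - q * (1 + c - q * lam) - q * s ≤ 2 * S := by
      exact (pow_le_pow_iff_left₀ (sub_nonneg.2 hupper) (by linarith : (0:ℝ) ≤ 2 * S) two_ne_zero).1 hsq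
    linarith
  · rw [hx2, div_le_div_iff₀ (by norm_num : (0:ℝ) < 2) hq]
    linarith [hupper]
end

section
/- Suppose $0 < c < 1$, $0 < \delta \le q$, $\lambda > 0$, and $\lambda \ge (\sqrt{q-c\delta}+\sqrt{c(q-\delta)})^2/q^2$. Then $\lambda \ge (1-c)/\delta$. -/
theorem stmt_14 (c δ q lam : ℝ) (hc0 : 0 < c) (hc1 : c < 1)
    (hδ : 0 < δ) (hδq : δ ≤ q) (hlam : 0 < lam)
    (hqd : q - δ ≤ c * (q - c * δ))
    (hcut : (Real.sqrt (q - c * δ) + Real.sqrt (c * (q - δ))) ^ 2 / q ^ 2 ≤ lam) :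
    (1 - c) / δ ≤ lam := by
  have hq : 0 < q := lt_of_lt_of_le hδ hδq
  have hA : (0:ℝ) ≤ q - c * δ := by nlinarith
  have hB : (0:ℝ) ≤ c * (q - δ) := by nlinarith
  set A := q - c * δ with hAdef
  set B := c * (q - δ) with hBdef
  have hABprod : Real.sqrt A * Real.sqrt B = Real.sqrt (A * B) :=
    (Real.sqrt_mul hA B).symm
  have hδlb : q ≤ (1 + c) * δ := by nlinarith
  have key : (q - δ) * ((1 - c) * q - 2 * c * δ) ≤ 2 * δ * Real.sqrt (A * B) := by
    rcases le_or_gt ((1 - c) * q - 2 * c * δ) 0 with h | h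
    · have h1 : (q - δ) * ((1 - c) * q - 2 * c * δ) ≤ 0 :=
        mul_nonpos_of_nonneg_of_nonpos (by linarith) h
      have h2 : 0 ≤ 2 * δ * Real.sqrt (A * B) := by positivity
      linarith
    · have hLHS : 0 ≤ (q - δ) * ((1 - c) * q - 2 * c * δ) :=
        mul_nonneg (by linarith) h.le
      have heq : Real.sqrt ((2*δ)^2 * (A*B)) = 2 * δ * Real.sqrt (A * B) := by
        rw [Real.sqrt_mul (by positivity : (0:ℝ) ≤ (2*δ)^2),
          Real.sqrt_sq (by positivity : (0:ℝ) ≤ 2*δ)]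
      rw [← heq]
      rw [show (q - δ) * ((1 - c) * q - 2 * c * δ) =
          Real.sqrt (((q - δ) * ((1 - c) * q - 2 * c * δ))^2) by
        rw [Real.sqrt_sq hLHS]]
      apply Real.sqrt_le_sqrt
      have hsq : (q - δ)^2 ≤ c * (q - c*δ) * (q - δ) := by nlinarith
      have h2δ : (1 - c) * q - 2 * c * δ ≤ 2 * δ := by nlinarith
      have hsq2 : ((1 - c) * q - 2 * c * δ)^2 ≤ (2*δ)^2 := by nlinarith
      calc ((q - δ) * ((1 - c) * q - 2 * c * δ))^2
          = (q - δ)^2 * ((1 - c) * q - 2 * c * δ)^2 := by ring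
        _ ≤ (c * (q - c*δ) * (q - δ)) * ((2*δ)^2) := by
            apply mul_le_mul hsq hsq2 (by positivity) (by nlinarith)
        _ = (2*δ)^2 * (A * B) := by rw [hAdef, hBdef]; ring
  have hmain : (1 - c) * q^2 ≤ δ * (Real.sqrt A + Real.sqrt B)^2 := by
    have hsqA : Real.sqrt A ^ 2 = A := Real.sq_sqrt hA
    have hsqB : Real.sqrt B ^ 2 = B := Real.sq_sqrt hB
    have hexp : (Real.sqrt A + Real.sqrt B)^2 = A + B + 2 * Real.sqrt (A * B) := by
      rw [add_sq, hsqA, hsqB, mul_assoc, hABprod]; ring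
    rw [hexp]
    have hid : (1 - c) * q^2 = δ * (A + B) + (q - δ) * ((1 - c) * q - 2 * c * δ) := by
      rw [hAdef, hBdef]; ring
    nlinarith [key]
  have hstep : (1 - c) / δ ≤ (Real.sqrt A + Real.sqrt B)^2 / q^2 := by
    rw [div_le_div_iff₀ hδ (by positivity)]
    linarith [hmain]
  linarith [hcut, hstep]
end
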